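/- In a model M of T, a formula φ(x;y) is an equation if and only if for every b in M the set φ(M,b) is indiscernibly closed, i.e., whenever (a_i)_{i∈ℕ} is an indiscernible sequence with a_i ∈ φ(M,b) for all i>0, then a_0 ∈ φ(M,b). (It suffices to verify this in a sufficiently saturated model.) -/

import Mathlib

/-!
`φ` fails to be an equation exactly when some model of `T` contains a ladder: tuples `aₖ, bₖ`
with `φ(aₘ, bₖ)` for `k < m` and `¬φ(aₖ, bₖ)`, which make `⋂_{k < n} φ(M, bₖ)` strictly
decreasing in `n`.

If `φ(M, b)` is not indiscernibly closed, as witnessed by `(aᵢ)`, then indiscernibility moves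
`b` along the sequence: for every `n` and `K` there is `b'` with `¬φ(aₙ, b')` and `φ(aᵢ, b')`
for `n < i ≤ n + K`. These give ladders of every finite length, and compactness gives an infinite
one. Conversely, Ramsey's theorem and compactness turn a ladder `(aₖ, bₖ)` into an indiscernible
ladder; then `(aᵢ)` is indiscernible with `aᵢ ∈ φ(N, b₀)` for `i > 0` but `a₀ ∉ φ(N, b₀)`.
-/

open FirstOrder FirstOrder.Language Set

universe u v w

namespace Equationality

variable {L : FirstOrder.Language.{u, v}}

section Struc
variable {M : Type w} [L.Structure M]

/-- The instance of the formula `φ(x; y)` at the parameter tuple `b`. -/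
def instSet {α β : Type*} (φ : L.Formula (α ⊕ β)) (b : β → M) : Set (α → M) :=
  {a | φ.Realize (Sum.elim a b)}

/-- A sequence of `γ`-tuples indexed by a linear order is indiscernible if any two strictly
increasing finite subsequences satisfy the same formulas. -/
def IsIndiscernible {I : Type*} [LinearOrder I] {γ : Type*} (a : I → γ → M) : Prop :=
  ∀ (n : ℕ) (i j : Fin n → I), StrictMono i → StrictMono j →
    ∀ φ : L.Formula (Fin n × γ),
      φ.Realize (fun p => a (i p.1) p.2) ↔ φ.Realize (fun p => a (j p.1) p.2)

/-- The complete type of a tuple over `∅`, as the set of formulas it realizes. -/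
def typeOf {γ : Type*} (a : γ → M) : Set (L.Formula γ) := {φ | φ.Realize a}

end Struc

variable (T : L.Theory)

/-- `φ(x; y)` is an equation for `T`: in every model of `T`, the family of finite
intersections of instances of `φ` has the descending chain condition. -/
def IsEquation {α β : Type*} (φ : L.Formula (α ⊕ β)) : Prop :=
  ∀ (M : Theory.ModelType.{u, v, max u v} T) (B : ℕ → Finset (β → M)),
    (Antitone fun n => ⋂ b ∈ B n, instSet φ b) →
    ∃ N, ∀ n, N ≤ n → (⋂ b ∈ B n, instSet φ b) = ⋂ b ∈ B N, instSet φ b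

/-- A complete type over `∅` (in the variables `γ`), presented as the set of formulas
realized by some tuple in some model of `T`. -/
def IsRealizedType {γ : Type*} (p : Set (L.Formula γ)) : Prop :=
  ∃ (M : Theory.ModelType.{u, v, max u v} T) (a : γ → M), typeOf a = p

/-- `p ⟶ q`: there are a model of `T`, a tuple `b` and an indiscernible sequence `(aᵢ)`
with `aᵢ ⊨ p(x, b)` for `i > 0` and `a₀ ⊨ q(x, b)`. -/
def Pf {α β : Type*} (p q : Set (L.Formula (α ⊕ β))) : Prop :=
  ∃ (M : Theory.ModelType.{u, v, max u v} T) (b : β → M) (a : ℕ → α → M),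
    IsIndiscernible (L := L) a ∧ (∀ i : ℕ, 0 < i → typeOf (Sum.elim (a i) b) = p) ∧
      typeOf (Sum.elim (a 0) b) = q

/-- A subset `X` of the `α`-tuples of a structure is indiscernibly closed if whenever `(aᵢ)` is an
indiscernible sequence with `aᵢ ∈ X` for all `i > 0`, then also `a₀ ∈ X`. -/
def IsIndiscerniblyClosed {M : Type w} [L.Structure M] {α : Type*} (X : Set (α → M)) : Prop :=
  ∀ a : ℕ → α → M, IsIndiscernible (L := L) a → (∀ i : ℕ, 0 < i → a i ∈ X) → a 0 ∈ X

universe w'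

section Ramsey

theorem _root_.StrictMono.exists_strictMono_eq_comp {ι α β : Type*} [Preorder ι] [LinearOrder α]
    [Preorder β] {g : α → β} (hg : StrictMono g) {t : ι → β} (ht : StrictMono t)
    (h : range t ⊆ range g) : ∃ u : ι → α, StrictMono u ∧ t = g ∘ u := by
  choose u hu using fun i => h (mem_range_self i)
  refine ⟨u, fun i j hij => hg.lt_iff_lt.1 ?_, funext fun i => (hu i).symm⟩
  rw [hu, hu]
  exact ht hij

variable {C : Type*}

theorem exists_strictMono_forall_eq_apply_zero {n : ℕ} (f : (Fin (n + 1) → ℕ) → C)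
    (ih : ∀ (f : (Fin n → ℕ) → C) (A : Set ℕ), A.Infinite → ∃ B ⊆ A, B.Infinite ∧
      ∃ c, ∀ t : Fin n → ℕ, StrictMono t → range t ⊆ B → f t = c)
    {A : Set ℕ} (hA : A.Infinite) :
    ∃ x : ℕ → ℕ, StrictMono x ∧ range x ⊆ A ∧
      ∃ d : ℕ → C, ∀ u : Fin (n + 1) → ℕ, StrictMono u → f (x ∘ u) = d (u 0) := by
  -- `x k` is the least element of the `k`-th term of a decreasing sequence of infinite sets, the
  -- next term being chosen by `ih` so that `f (Fin.cons (x k) t)` is constant for `t` in it.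
  choose B hBsub hBinf c hc using fun S : {S : Set ℕ // S.Infinite} =>
    ih (fun t => f (Fin.cons (sInf S.1) t)) (S.1 \ Iic (sInf S.1)) (S.2.sdiff (finite_Iic _))
  let S : ℕ → {S : Set ℕ // S.Infinite} := fun k => (fun S => ⟨B S, hBinf S⟩)^[k] ⟨A, hA⟩
  let x : ℕ → ℕ := fun k => sInf (S k).1
  have hS_succ : ∀ k, (S (k + 1)).1 = B (S k) := fun k => by
    simp only [S, Function.iterate_succ_apply']
  have hS_anti : Antitone fun k => (S k).1 := antitone_nat_of_succ_le fun k =>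
    (hS_succ k).trans_subset ((hBsub _).trans sdiff_subset)
  have hx_mem : ∀ k, x k ∈ (S k).1 := fun k => Nat.sInf_mem (S k).2.nonempty
  have hx : StrictMono x := strictMono_nat_of_lt_succ fun k => by
    have := hBsub _ ((hS_succ k).subst (motive := fun s => x (k + 1) ∈ s) (hx_mem (k + 1)))
    simpa using this.2
  refine ⟨x, hx, range_subset_iff.2 fun k => hS_anti (Nat.zero_le k) (hx_mem k), c ∘ S,
    fun u hu => ?_⟩
  have htail : range (x ∘ u ∘ Fin.succ) ⊆ B (S (u 0)) := by
    rintro _ ⟨j, rfl⟩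
    rw [← hS_succ]
    exact hS_anti (hu (Fin.succ_pos j)) (hx_mem _)
  rw [← Fin.cons_self_tail (x ∘ u)]
  exact hc _ _ (hx.comp (hu.comp (Fin.strictMono_succ))) htail

/-- Infinite Ramsey theorem. -/
theorem exists_infinite_subset_forall_eq [Finite C] (n : ℕ) (f : (Fin n → ℕ) → C) {A : Set ℕ}
    (hA : A.Infinite) : ∃ B ⊆ A, B.Infinite ∧
      ∃ c, ∀ t : Fin n → ℕ, StrictMono t → range t ⊆ B → f t = c := by
  induction n generalizing A with
  | zero => exact ⟨A, subset_rfl, hA, f default, fun t _ _ => congrArg f (Subsingleton.elim _ _)⟩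
  | succ n ih =>
    obtain ⟨x, hx, hxA, d, hd⟩ := exists_strictMono_forall_eq_apply_zero f (fun f _ => ih f) hA
    obtain ⟨c, hc⟩ := Finite.exists_infinite_fiber d
    refine ⟨x '' (d ⁻¹' {c}), (image_subset_range _ _).trans hxA,
      (infinite_coe_iff.1 hc).image hx.injective.injOn, c, fun t ht htB => ?_⟩
    obtain ⟨u, hu, rfl⟩ := hx.exists_strictMono_eq_comp ht (htB.trans (image_subset_range _ _))
    obtain ⟨k, hk, hku⟩ := htB (mem_range_self 0)
    rw [hd u hu, ← hx.injective hku]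
    exact hk

theorem exists_strictMono_forall_comp_eq [Finite C] (n : ℕ) (f : (Fin n → ℕ) → C) :
    ∃ g : ℕ → ℕ, StrictMono g ∧ ∃ c, ∀ u : Fin n → ℕ, StrictMono u → f (g ∘ u) = c := by
  obtain ⟨B, -, hB, c, hc⟩ := exists_infinite_subset_forall_eq n f infinite_univ
  exact ⟨Nat.nth (· ∈ B), Nat.nth_strictMono hB, c, fun u hu =>
    hc _ ((Nat.nth_strictMono hB).comp hu)
      (range_subset_iff.2 fun i => Nat.nth_mem_of_infinite hB _)⟩

end Ramsey

section Indiscernible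

variable {M : Type*} [L.Structure M] {γ : Type*}

def IsIndiscernibleFor {n : ℕ} (ψ : L.Formula (Fin n × γ)) (e : ℕ → γ → M) : Prop :=
  ∀ u v : Fin n → ℕ, StrictMono u → StrictMono v →
    (ψ.Realize (Function.uncurry (e ∘ u)) ↔ ψ.Realize (Function.uncurry (e ∘ v)))

def RealizeOnIncreasing {n : ℕ} (ψ : L.Formula (Fin n × γ)) (e : ℕ → γ → M) : Prop :=
  ∀ u : Fin n → ℕ, StrictMono u → ψ.Realize (Function.uncurry (e ∘ u))

theorem IsIndiscernible.comp_coords {δ I : Type*} [LinearOrder I] {e : I → γ → M}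
    (h : IsIndiscernible (L := L) e) (f : δ → γ) : IsIndiscernible (L := L) fun i => e i ∘ f :=
  fun n i j hi hj ψ => by
    have := h n i j hi hj (ψ.relabel (Prod.map id f))
    rwa [Formula.realize_relabel, Formula.realize_relabel] at this

theorem IsIndiscernibleFor.comp_strictMono {n : ℕ} {ψ : L.Formula (Fin n × γ)} {e : ℕ → γ → M}
    (h : IsIndiscernibleFor ψ e) {g : ℕ → ℕ} (hg : StrictMono g) : IsIndiscernibleFor ψ (e ∘ g) :=
  fun u v hu hv => h (g ∘ u) (g ∘ v) (hg.comp hu) (hg.comp hv)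

theorem exists_strictMono_isIndiscernibleFor {n : ℕ} (ψ : L.Formula (Fin n × γ))
    (e : ℕ → γ → M) : ∃ g : ℕ → ℕ, StrictMono g ∧ IsIndiscernibleFor ψ (e ∘ g) := by
  obtain ⟨g, hg, c, hc⟩ :=
    exists_strictMono_forall_comp_eq n fun u => ψ.Realize (Function.uncurry (e ∘ u))
  exact ⟨g, hg, fun u v hu hv => iff_of_eq ((hc u hu).trans (hc v hv).symm)⟩

theorem exists_strictMono_forall_isIndiscernibleFor (D : Finset (Σ n, L.Formula (Fin n × γ)))
    (e : ℕ → γ → M) : ∃ g : ℕ → ℕ, StrictMono g ∧ ∀ d ∈ D, IsIndiscernibleFor d.2 (e ∘ g) := by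
  classical
  induction D using Finset.induction_on with
  | empty => exact ⟨id, strictMono_id, by simp⟩
  | insert d D _ ih =>
    obtain ⟨g, hg, hD⟩ := ih
    obtain ⟨g', hg', hd⟩ := exists_strictMono_isIndiscernibleFor d.2 (e ∘ g)
    refine ⟨g ∘ g', hg.comp hg', (Finset.forall_mem_insert _ _ _).2 ⟨hd, fun d' hd' => ?_⟩⟩
    exact (hD d' hd').comp_strictMono hg'

theorem realize_relabel_prodMap {n : ℕ} {ψ : L.Formula (Fin n × γ)} {u : Fin n → ℕ}
    {x : ℕ × γ → M} :
    (ψ.relabel (Prod.map u id)).Realize x ↔ ψ.Realize (Function.uncurry (Function.curry x ∘ u)) :=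
  Formula.realize_relabel

end Indiscernible

theorem exists_modelType_forall_realize {γ : Type w} {I : Type*} (F : I → L.Formula γ)
    (h : ∀ J : Finset I, ∃ (M : Theory.ModelType.{u, v, w'} T) (x : γ → M),
      ∀ j ∈ J, (F j).Realize x) :
    ∃ (M : Theory.ModelType.{u, v, max u v w} T) (x : γ → M), ∀ j, (F j).Realize x := by
  classical
  let S : L[[γ]].Theory := range fun j => Formula.equivSentence (F j)
  let S' : Finset I → L[[γ]].Theory := fun J =>
    (L.lhomWithConstants γ).onTheory T ∪ (fun j => Formula.equivSentence (F j)) '' J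
  have hS' : Theory.IsSatisfiable (⋃ J, S' J) := by
    refine (Theory.isSatisfiable_directed_union_iff (Monotone.directed_le fun J J' hJ =>
      union_subset_union_right _ (image_mono (Finset.coe_subset.2 hJ)))).2 fun J => ?_
    obtain ⟨M, x, hx⟩ := h J
    -- a finite part is contained in the complete type of a tuple realizing it
    refine (T.typeOf x).isMaximal.1.mono (union_subset (T.typeOf x).subset ?_)
    rintro _ ⟨j, hj, rfl⟩
    exact Theory.CompleteType.formula_mem_typeOf.2 (hx j hj)
  have hS : ((L.lhomWithConstants γ).onTheory T ∪ S).IsSatisfiable := by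
    refine hS'.mono (union_subset (subset_iUnion_of_subset ∅ subset_union_left) ?_)
    rintro _ ⟨j, rfl⟩
    exact mem_iUnion.2 ⟨{j}, Or.inr ⟨j, by simp, rfl⟩⟩
  obtain ⟨p, hp⟩ : {p : T.CompleteType γ | S ⊆ p}.Nonempty := nonempty_iff_ne_empty.2 fun he =>
    (Theory.CompleteType.setOfPred_subset_eq_empty_iff S).1 he hS
  obtain ⟨M, x, rfl⟩ := Theory.exists_modelType_is_realized_in T p
  exact ⟨M, x, fun j => Theory.CompleteType.formula_mem_typeOf.1 (hp ⟨j, rfl⟩)⟩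

theorem exists_isIndiscernible_realizeOnIncreasing {γ : Type w}
    (M : Theory.ModelType.{u, v, w'} T) (e : ℕ → γ → M) :
    ∃ (N : Theory.ModelType.{u, v, max u v w} T) (e' : ℕ → γ → N), IsIndiscernible (L := L) e' ∧
      ∀ (n : ℕ) (ψ : L.Formula (Fin n × γ)),
        RealizeOnIncreasing ψ e → RealizeOnIncreasing ψ e' := by
  classical
  -- The `inl` formulas say that `e'` is indiscernible, the `inr` ones that it satisfies what every
  -- increasing tuple of `e` satisfies; by Ramsey's theorem a subsequence of `e` realizes any finite
  -- part of them.
  let SM (n : ℕ) := {u : Fin n → ℕ // StrictMono u}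
  let I := (Σ n, L.Formula (Fin n × γ) × SM n × SM n) ⊕
    (Σ n, {ψ : L.Formula (Fin n × γ) // RealizeOnIncreasing ψ e} × SM n)
  let F : I → L.Formula (ℕ × γ) := Sum.elim
    (fun ⟨_, ψ, u, v⟩ => (ψ.relabel (Prod.map u.1 id)).iff (ψ.relabel (Prod.map v.1 id)))
    (fun ⟨_, ψ, u⟩ => ψ.1.relabel (Prod.map u.1 id))
  let formula : I → Σ n, L.Formula (Fin n × γ) :=
    Sum.elim (fun ⟨n, ψ, _⟩ => ⟨n, ψ⟩) (fun ⟨n, ψ, _⟩ => ⟨n, ψ.1⟩)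
  obtain ⟨N, x, hx⟩ := exists_modelType_forall_realize T F fun J => by
    obtain ⟨g, hg, hJ⟩ := exists_strictMono_forall_isIndiscernibleFor (J.image formula) e
    refine ⟨M, Function.uncurry (e ∘ g), ?_⟩
    rintro (⟨n, ψ, u, v⟩ | ⟨n, ψ, u⟩) hj
    · simp only [F, Sum.elim_inl, Formula.realize_iff, realize_relabel_prodMap]
      exact hJ _ (Finset.mem_image_of_mem formula hj) u.1 v.1 u.2 v.2
    · exact realize_relabel_prodMap.2 (ψ.2 _ (hg.comp u.2))
  refine ⟨N, Function.curry x, fun n i j hi hj ψ => ?_, fun n ψ hψ u hu => ?_⟩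
  · have := hx (.inl ⟨n, ψ, ⟨i, hi⟩, ⟨j, hj⟩⟩)
    simp only [F, Sum.elim_inl, Formula.realize_iff, realize_relabel_prodMap] at this
    exact this
  · exact realize_relabel_prodMap.1 (hx (.inr ⟨n, ⟨ψ, hψ⟩, ⟨u, hu⟩⟩))

theorem exists_realizeOnIncreasing_of_forall_lt {γ : Type w} {n : ℕ} (ψ : L.Formula (Fin n × γ))
    (h : ∀ K : ℕ, ∃ (M : Theory.ModelType.{u, v, w'} T) (e : ℕ → γ → M),
      ∀ u : Fin n → ℕ, StrictMono u → (∀ i, u i < K) → ψ.Realize (Function.uncurry (e ∘ u))) :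
    ∃ (N : Theory.ModelType.{u, v, max u v w} T) (e : ℕ → γ → N), RealizeOnIncreasing ψ e := by
  obtain ⟨N, x, hx⟩ := exists_modelType_forall_realize T
    (fun u : {u : Fin n → ℕ // StrictMono u} => ψ.relabel (Prod.map u.1 id)) fun J => by
      obtain ⟨M, e, he⟩ := h (J.sup fun u => Finset.univ.sup u.1 + 1)
      refine ⟨M, Function.uncurry e, fun u hu => realize_relabel_prodMap.2 (he u.1 u.2 fun i => ?_)⟩
      exact (Nat.lt_succ_of_le (Finset.le_sup (Finset.mem_univ i))).trans_le
        (Finset.le_sup (f := fun u : {u : Fin n → ℕ // StrictMono u} => Finset.univ.sup u.1 + 1) hu)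
  exact ⟨N, Function.curry x, fun u hu => realize_relabel_prodMap.1 (hx ⟨u, hu⟩)⟩

section Ladder

variable {α β : Type*} {M : Type*} [L.Structure M] {φ : L.Formula (α ⊕ β)}

def IsLadder (φ : L.Formula (α ⊕ β)) (a : ℕ → α → M) (b : ℕ → β → M) : Prop :=
  (∀ k m, k < m → a m ∈ instSet φ (b k)) ∧ ∀ k, a k ∉ instSet φ (b k)

def ladder (φ : L.Formula (α ⊕ β)) : L.Formula (Fin 2 × (α ⊕ β)) :=
  φ.relabel (Sum.elim (fun x => (1, Sum.inl x)) (fun y => (0, Sum.inr y))) ⊓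
    ∼(φ.relabel fun z => (0, z))

theorem realize_ladder {e : ℕ → α ⊕ β → M} {u : Fin 2 → ℕ} :
    (ladder φ).Realize (Function.uncurry (e ∘ u)) ↔
      e (u 1) ∘ Sum.inl ∈ instSet φ (e (u 0) ∘ Sum.inr) ∧
        e (u 0) ∘ Sum.inl ∉ instSet φ (e (u 0) ∘ Sum.inr) := by
  have : Function.uncurry (e ∘ u) ∘ Sum.elim (fun x => (1, Sum.inl x)) (fun y => (0, Sum.inr y)) =
      Sum.elim (e (u 1) ∘ Sum.inl) (e (u 0) ∘ Sum.inr) := by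
    ext (x | y) <;> rfl
  simp only [ladder, Formula.realize_inf, Formula.realize_not, Formula.realize_relabel, this]
  change _ ∧ _ ↔ _ ∧ ¬φ.Realize (Sum.elim (e (u 0) ∘ Sum.inl) (e (u 0) ∘ Sum.inr))
  rw [Sum.elim_comp_inl_inr]
  rfl

theorem strictMono_vec_two {k m : ℕ} (h : k < m) : StrictMono ![k, m] :=
  Fin.strictMono_iff_lt_succ.2 fun i => by fin_cases i; exact h

theorem isLadder_iff_realizeOnIncreasing {e : ℕ → α ⊕ β → M} :
    IsLadder φ (fun k => e k ∘ Sum.inl) (fun k => e k ∘ Sum.inr) ↔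
      RealizeOnIncreasing (ladder φ) e := by
  refine ⟨fun h u hu => realize_ladder.2 ⟨h.1 _ _ (hu Fin.zero_lt_one), h.2 _⟩,
    fun h => ⟨fun k m hkm => ?_, fun k => ?_⟩⟩
  · exact (realize_ladder.1 (h ![k, m] (strictMono_vec_two hkm))).1
  · exact (realize_ladder.1 (h ![k, k + 1] (strictMono_vec_two k.lt_succ_self))).2

theorem exists_isLadder_of_antitone {B : ℕ → Finset (β → M)}
    (hB : Antitone fun n => ⋂ b ∈ B n, instSet φ b)
    (hst : ¬∃ N, ∀ n, N ≤ n → (⋂ b ∈ B n, instSet φ b) = ⋂ b ∈ B N, instSet φ b) :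
    ∃ (a : ℕ → α → M) (b : ℕ → β → M), IsLadder φ a b := by
  push Not at hst
  have hstep : ∀ N, ∃ n, N ≤ n ∧ ∃ a ∈ ⋂ b ∈ B N, instSet φ b, ∃ b ∈ B n, a ∉ instSet φ b := by
    intro N
    obtain ⟨n, hn, hne⟩ := hst N
    obtain ⟨a, haN, han⟩ := exists_of_ssubset ((hB hn).ssubset_of_ne hne)
    simp only [mem_iInter₂, not_forall] at han
    obtain ⟨b, hb, hab⟩ := han
    exact ⟨n, hn, a, haN, b, hb, hab⟩
  choose next hnext a ha b hb hab using hstep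
  let N : ℕ → ℕ := fun k => next^[k] 0
  have hN_succ : ∀ k, N (k + 1) = next (N k) := fun k => Function.iterate_succ_apply' _ _ _
  have hN : Monotone N := monotone_nat_of_le_succ fun k => (hN_succ k).symm ▸ hnext _
  refine ⟨a ∘ N, b ∘ N, fun k m hkm => ?_, fun k => hab _⟩
  have ham : a (N m) ∈ ⋂ b ∈ B (N (k + 1)), instSet φ b := hB (hN hkm) (ha _)
  exact mem_iInter₂.1 ham _ ((hN_succ k).symm ▸ hb _)

end Ladder

section Equation

variable {α β : Type*} {φ : L.Formula (α ⊕ β)}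

theorem IsLadder.not_isEquation {M : Theory.ModelType.{u, v, max u v} T} {a : ℕ → α → M}
    {b : ℕ → β → M} (h : IsLadder φ a b) : ¬IsEquation T φ := by
  classical
  intro hφ
  let B : ℕ → Finset (β → M) := fun n => (Finset.range n).image b
  obtain ⟨N, hN⟩ := hφ M B fun n m hnm => biInter_subset_biInter_left <|
    Finset.coe_subset.2 (Finset.image_subset_image (Finset.range_subset_range.2 hnm))
  have hmem : a N ∈ ⋂ b' ∈ B N, instSet φ b' := by
    simp only [B, mem_iInter₂, Finset.mem_image, Finset.mem_range]
    rintro _ ⟨k, hk, rfl⟩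
    exact h.1 k N hk
  have hnot : a N ∉ ⋂ b' ∈ B (N + 1), instSet φ b' := fun h' =>
    h.2 N (mem_iInter₂.1 h' (b N) (Finset.mem_image_of_mem b (Finset.self_mem_range_succ N)))
  exact hnot (hN (N + 1) N.le_succ ▸ hmem)

theorem isEquation_iff_forall_not_isLadder :
    IsEquation T φ ↔ ∀ (M : Theory.ModelType.{u, v, max u v} T) (a : ℕ → α → M)
      (b : ℕ → β → M), ¬IsLadder φ a b := by
  refine ⟨fun hφ M a b h => h.not_isEquation T hφ, fun h M B hB => by_contra fun hst => ?_⟩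
  obtain ⟨a, b, hab⟩ := exists_isLadder_of_antitone hB hst
  exact h M a b hab

end Equation

section Closed

variable {α β : Type*} {M : Type*} [L.Structure M] {φ : L.Formula (α ⊕ β)}

theorem exists_param_of_isIndiscernible [Finite β] {a : ℕ → α → M} {b : β → M}
    (ha : IsIndiscernible (L := L) a) (hpos : ∀ i, 0 < i → a i ∈ instSet φ b)
    (h0 : a 0 ∉ instSet φ b) (K n : ℕ) :
    ∃ b' : β → M, a n ∉ instSet φ b' ∧ ∀ i, n < i → i ≤ n + K → a i ∈ instSet φ b' := by
  let inst (j : Fin (K + 1)) : L.Formula ((Fin (K + 1) × α) ⊕ β) :=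
    φ.relabel (Sum.map (j, ·) id)
  have realize_inst (x : Fin (K + 1) × α → M) (b' : β → M) (j : Fin (K + 1)) :
      (inst j).Realize (Sum.elim x b') ↔ (fun y => x (j, y)) ∈ instSet φ b' := by
    rw [Formula.realize_relabel]
    exact iff_of_eq (congrArg φ.Realize (by ext (y | y) <;> rfl))
  -- `θ(x₀, …, x_K)` says `∃ y, ¬φ(x₀, y) ∧ φ(x₁, y) ∧ ⋯ ∧ φ(x_K, y)`
  let θ : L.Formula (Fin (K + 1) × α) :=
    Formula.iExs β (∼(inst 0) ⊓ Formula.iInf fun j : Fin K => inst j.succ)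
  have realize_θ (x : Fin (K + 1) × α → M) : θ.Realize x ↔ ∃ b' : β → M,
      (fun y => x (0, y)) ∉ instSet φ b' ∧
        ∀ j : Fin K, (fun y => x (j.succ, y)) ∈ instSet φ b' := by
    simp only [θ, Formula.realize_iExs, Formula.realize_inf, Formula.realize_not,
      Formula.realize_iInf, realize_inst]
  have hθ : θ.Realize fun p => a (n + p.1) p.2 :=
    (ha (K + 1) (fun j => n + j) Fin.val (fun _ _ h => Nat.add_lt_add_left h n)
      Fin.val_strictMono θ).2 ((realize_θ _).2 ⟨b, h0, fun j => hpos _ j.succ_pos⟩)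
  obtain ⟨b', hn, hsucc⟩ := (realize_θ _).1 hθ
  refine ⟨b', by simpa only [Fin.val_zero, add_zero] using hn, fun i hni hiK => ?_⟩
  have := hsucc ⟨i - n - 1, by omega⟩
  simp only [Fin.val_succ] at this
  rwa [show n + (i - n - 1 + 1) = i by omega] at this

theorem exists_isLadder_of_not_isIndiscerniblyClosed {α β : Type w} [Finite β]
    {φ : L.Formula (α ⊕ β)} {M : Theory.ModelType.{u, v, w'} T} {b : β → M}
    (h : ¬IsIndiscerniblyClosed (L := L) (instSet φ b)) :
    ∃ (N : Theory.ModelType.{u, v, max u v w} T) (a' : ℕ → α → N) (b' : ℕ → β → N),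
      IsLadder φ a' b' := by
  simp only [IsIndiscerniblyClosed, not_forall] at h
  obtain ⟨a, ha, hpos, h0⟩ := h
  obtain ⟨N, e, he⟩ := exists_realizeOnIncreasing_of_forall_lt T (ladder φ) fun K => by
    choose b' hb'n hb' using exists_param_of_isIndiscernible ha hpos h0 K
    refine ⟨M, fun k => Sum.elim (a k) (b' k), fun u hu huK => realize_ladder.2 ?_⟩
    exact ⟨hb' _ _ (hu Fin.zero_lt_one) (by have := huK 1; omega), hb'n _⟩
  exact ⟨N, _, _, isLadder_iff_realizeOnIncreasing.2 he⟩

theorem not_isIndiscerniblyClosed_of_realizeOnIncreasing {e : ℕ → α ⊕ β → M}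
    (he : IsIndiscernible (L := L) e) (hl : RealizeOnIncreasing (ladder φ) e) :
    ¬IsIndiscerniblyClosed (L := L) (instSet φ (e 0 ∘ Sum.inr)) := fun hcl =>
  have h := isLadder_iff_realizeOnIncreasing.2 hl
  h.2 0 (hcl _ (he.comp_coords Sum.inl) fun i hi => h.1 0 i hi)

end Closed

theorem isEquation_iff_indiscerniblyClosed {α β : Type (max u v)} [Finite β]
    (φ : L.Formula (α ⊕ β)) :
    IsEquation T φ ↔
      ∀ (M : Theory.ModelType.{u, v, max u v} T) (b : β → M),
        IsIndiscerniblyClosed (L := L) (instSet φ b) := by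
  rw [isEquation_iff_forall_not_isLadder]
  refine ⟨fun h M b => by_contra fun hb => ?_, fun h M a b hab => ?_⟩
  · obtain ⟨N, a', b', hl⟩ := exists_isLadder_of_not_isIndiscerniblyClosed T hb
    exact h N a' b' hl
  · obtain ⟨N, e, he, hl⟩ :=
      exists_isIndiscernible_realizeOnIncreasing T M fun k => Sum.elim (a k) (b k)
    exact not_isIndiscerniblyClosed_of_realizeOnIncreasing he
      (hl 2 (ladder φ) (isLadder_iff_realizeOnIncreasing.1 hab)) (h N _)

end Equationality
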